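/- arXiv:2109.05273 — 2 statements merged into one kernel-verified Lean document; each statement's English description precedes it below -/
import Mathlib

section
/- For every natural number k, the matrix z_k defined by the inductive recipe below is an element of SL_k(ℤ); that is, z_k has integer entries and det z_k = 1. -/
/-- The antidiagonal matrix `w_k ∈ GL_k(ℤ)`: `(i,j)`-entry is `1` if `i + j = k + 1`
(in 1-based indexing) and `0` otherwise. -/
def wmat (k : ℕ) : Matrix (Fin k) (Fin k) ℤ :=
  Matrix.of fun i j => if (i : ℕ) + (j : ℕ) + 1 = k then 1 else 0

/-- The family `z_k` of integer matrices, defined inductively: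
`z_0` is the empty matrix, `z_1 = [1]`, and
`z_k = [[w_{k-1}, 0],[0,1]] · [[z_{k-2}⁻¹, 0],[0, 1₂]] · [[ᵗz_{k-1} w_{k-1} z_{k-1}, ᵗe_{k-1}],[0,1]]`
for `k ≥ 2`, where `e_{k-1} = [0, …, 0, 1]` is a row vector. -/
noncomputable def zmat : (k : ℕ) → Matrix (Fin k) (Fin k) ℤ
  | 0 => 1
  | 1 => 1
  | (k + 2) =>
      (Matrix.reindex finSumFinEquiv finSumFinEquiv
        (Matrix.fromBlocks (wmat (k + 1)) 0 0 (1 : Matrix (Fin 1) (Fin 1) ℤ))) *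
      (Matrix.reindex finSumFinEquiv finSumFinEquiv
        (Matrix.fromBlocks (zmat k)⁻¹ 0 0 (1 : Matrix (Fin 2) (Fin 2) ℤ))) *
      (Matrix.reindex finSumFinEquiv finSumFinEquiv
        (Matrix.fromBlocks ((Matrix.transpose (zmat (k + 1))) * wmat (k + 1) * zmat (k + 1))
          (Matrix.of fun (i : Fin (k + 1)) (_ : Fin 1) => if (i : ℕ) = k then 1 else 0)
          0 (1 : Matrix (Fin 1) (Fin 1) ℤ)))


lemma wmat_eq (k : ℕ) : wmat k = (Fin.revPerm : Equiv.Perm (Fin k)).permMatrix ℤ := by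
  ext i j
  simp only [wmat, Matrix.of_apply, Equiv.Perm.permMatrix, PEquiv.toMatrix_apply,
    Equiv.toPEquiv_apply, Option.mem_def, Option.some.injEq, Fin.revPerm_apply]
  have hi := i.isLt
  have hj := j.isLt
  have : (↑i + ↑j + 1 = k) ↔ (i.rev = j) := by
    rw [Fin.ext_iff, Fin.val_rev]; omega
  simp only [this]

lemma det_wmat_sq (k : ℕ) : (wmat k).det * (wmat k).det = 1 := by
  rw [wmat_eq, Matrix.det_permutation]
  rcases Int.units_eq_one_or (Equiv.Perm.sign (Fin.revPerm : Equiv.Perm (Fin k))) with h | h <;>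
    simp [h]

/-- For every natural number `k`, the matrix `z_k` lies in `SL_k(ℤ)`:
it has integer entries (by construction) and determinant `1`. -/
theorem zmat_mem_specialLinearGroup (k : ℕ) : (zmat k).det = 1 := by
  induction k using Nat.strong_induction_on with
  | _ k ih =>
    match k with
    | 0 => simp [zmat]
    | 1 => simp [zmat]
    | (k + 2) =>
      have h0 := ih k (by omega)
      have h1 := ih (k + 1) (by omega)
      rw [zmat]
      rw [Matrix.det_mul, Matrix.det_mul, Matrix.det_reindex_self, Matrix.det_reindex_self,
        Matrix.det_reindex_self, Matrix.det_fromBlocks_zero₂₁, Matrix.det_fromBlocks_zero₂₁,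
        Matrix.det_fromBlocks_zero₂₁, Matrix.det_mul, Matrix.det_mul, Matrix.det_transpose,
        Matrix.det_nonsing_inv, h0, h1]
      simp [det_wmat_sq]
end

section
/- Let n ≥ 2, let E be a finite nonempty index set with an involution ι ↦ ῑ, and let μ, ν be pure weights for GL_n and GL_{n−1} indexed by E, of purity weights w_μ and w_ν respectively. Assume the pair (μ,ν) is balanced, i.e., some integer j is a balanced place for (μ,ν). Define the half-integers μ̃^ι_i := μ^ι_i + (n+1−2i)/2 for 1 ≤ i ≤ n and ν̃^ι_k := ν^ι_k + (n−2k)/2 for 1 ≤ k ≤ n−1. Then for every ι ∈ E, every 1 ≤ i ≤ n and every 1 ≤ k ≤ n−1, the quantity μ̃^ι_i + ν̃^ι_k − μ̃^ῑ_{n+1−i} − ν̃^ῑ_{n−k} (which is an integer) is strictly positive if i + k ≤ n, and strictly negative if i + k > n. -/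
/-- Let `n ≥ 2`, `E` a finite nonempty index set with involution `ι ↦ ῑ`, and let
`μ`, `ν` be pure weights for `GL_n` and `GL_{n-1}` indexed by `E`, of purity weights
`wμ` and `wν` (so `μ^ι_i + μ^ῑ_{n+1-i} = wμ` and `ν^ι_k + ν^ῑ_{n-k} = wν`).
Assume `(μ, ν)` is balanced, i.e. some integer `j` is a balanced place.
Setting `μ̃^ι_i = μ^ι_i + (n+1-2i)/2` and `ν̃^ι_k = ν^ι_k + (n-2k)/2` (half-integers,
computed in `ℚ`), the quantity
`μ̃^ι_i + ν̃^ι_k - μ̃^ῑ_{n+1-i} - ν̃^ῑ_{n-k}` is strictly positive if `i + k ≤ n`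
and strictly negative if `i + k > n`, for all `ι ∈ E`, `1 ≤ i ≤ n`, `1 ≤ k ≤ n-1`. -/
theorem tilde_difference_sign
    (n : ℕ) (hn : 2 ≤ n)
    (E : Type*) [Fintype E] [Nonempty E]
    (conj : E → E) (hconj : ∀ ι, conj (conj ι) = ι)
    (μ : E → ℕ → ℤ) (ν : E → ℕ → ℤ)
    (hμ : ∀ ι, ∀ a b : ℕ, 1 ≤ a → a ≤ b → b ≤ n → μ ι b ≤ μ ι a)
    (hν : ∀ ι, ∀ a b : ℕ, 1 ≤ a → a ≤ b → b ≤ n - 1 → ν ι b ≤ ν ι a)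
    (wμ wν : ℤ)
    (hpureμ : ∀ ι, ∀ i : ℕ, 1 ≤ i → i ≤ n → μ ι i + μ (conj ι) (n + 1 - i) = wμ)
    (hpureν : ∀ ι, ∀ k : ℕ, 1 ≤ k → k ≤ n - 1 → ν ι k + ν (conj ι) (n - k) = wν)
    (hbal : ∃ j : ℤ, ∀ ι : E, ∀ k : ℕ, 1 ≤ k → k ≤ n - 1 →
        ν ι k + j ≤ -μ ι (n + 1 - k) ∧ -μ ι (n - k) ≤ ν ι k + j) :
    ∀ ι : E, ∀ i k : ℕ, 1 ≤ i → i ≤ n → 1 ≤ k → k ≤ n - 1 →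
      (let μt : E → ℕ → ℚ := fun ι' i' => (μ ι' i' : ℚ) + ((n : ℚ) + 1 - 2 * (i' : ℚ)) / 2
       let νt : E → ℕ → ℚ := fun ι' k' => (ν ι' k' : ℚ) + ((n : ℚ) - 2 * (k' : ℚ)) / 2
       let D : ℚ := μt ι i + νt ι k - μt (conj ι) (n + 1 - i) - νt (conj ι) (n - k)
       (i + k ≤ n → 0 < D) ∧ (n < i + k → D < 0)) := by

  obtain ⟨j, hj⟩ := hbal
  intro ι i k h1i hin h1k hkn
  intro μt νt D
  have hc1 : ((n + 1 - i : ℕ) : ℚ) = (n : ℚ) + 1 - (i : ℚ) := by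
    rw [Nat.cast_sub (by omega)]; push_cast; ring
  have hc2 : ((n - k : ℕ) : ℚ) = (n : ℚ) - (k : ℚ) := by
    rw [Nat.cast_sub (by omega)]
  have hD : D = ((μ ι i + ν ι k - μ (conj ι) (n + 1 - i) - ν (conj ι) (n - k) : ℤ) : ℚ)
      + (2 * (n : ℚ) + 1 - 2 * (i : ℚ) - 2 * (k : ℚ)) := by
    simp only [D, μt, νt]
    rw [hc1, hc2]; push_cast; ring
  constructor
  · intro hik
    -- lower bound: μ ι i + ν ι k ≥ -j
    have hA1 : -j ≤ μ ι i + ν ι k := by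
      have h1 := (hj ι k h1k hkn).2
      have h2 := hμ ι i (n - k) h1i (by omega) (by omega)
      linarith
    -- upper bound
    have hA2 : μ (conj ι) (n + 1 - i) + ν (conj ι) (n - k) ≤ -j := by
      have h1 := (hj (conj ι) (n - k) (by omega) (by omega)).1
      have e : n + 1 - (n - k) = k + 1 := by omega
      rw [e] at h1
      have h2 := hμ (conj ι) (k + 1) (n + 1 - i) (by omega) (by omega) (by omega)
      linarith
    have hA : (0 : ℤ) ≤ μ ι i + ν ι k - μ (conj ι) (n + 1 - i) - ν (conj ι) (n - k) := by
      linarith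
    have hA' : (0 : ℚ) ≤ ((μ ι i + ν ι k - μ (conj ι) (n + 1 - i) - ν (conj ι) (n - k) : ℤ) : ℚ) := by
      exact_mod_cast hA
    have hik' : (i : ℚ) + (k : ℚ) ≤ (n : ℚ) := by exact_mod_cast hik
    rw [hD]; linarith
  · intro hik
    have hB1 : μ ι i + ν ι k ≤ -j := by
      have h1 := (hj ι k h1k hkn).1
      have h2 := hμ ι (n + 1 - k) i (by omega) (by omega) hin
      linarith
    have hB2 : -j ≤ μ (conj ι) (n + 1 - i) + ν (conj ι) (n - k) := by
      have h1 := (hj (conj ι) (n - k) (by omega) (by omega)).2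
      have e : n - (n - k) = k := by omega
      rw [e] at h1
      have h2 := hμ (conj ι) (n + 1 - i) k (by omega) (by omega) (by omega)
      linarith
    have hA : μ ι i + ν ι k - μ (conj ι) (n + 1 - i) - ν (conj ι) (n - k) ≤ (0 : ℤ) := by
      linarith
    have hA' : ((μ ι i + ν ι k - μ (conj ι) (n + 1 - i) - ν (conj ι) (n - k) : ℤ) : ℚ) ≤ 0 := by
      exact_mod_cast hA
    have hik' : (n : ℚ) < (i : ℚ) + (k : ℚ) := by exact_mod_cast hik
    have : (n : ℚ) + 1 ≤ (i : ℚ) + (k : ℚ) := by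
      have : (n : ℕ) + 1 ≤ i + k := hik
      exact_mod_cast this
    rw [hD]; linarith
end
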